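/- Let a, b, c be integers with 2 ≤ a ≤ b ≤ c such that m(a,b,c) > 0 and F(c) < 3·F(a)·F(b). Then m(a,b,c) = 2, a = 2, c = b + 2, and b is even with b > 2; in particular (F(a), F(b), F(c)) = (1, F(b), F(b+2)). -/
import Mathlib

set_option maxHeartbeats 1000000


/-- `mF a b c = F(a)² + F(b)² + F(c)² − 3·F(a)·F(b)·F(c)` as an integer. -/
def mF (a b c : ℕ) : ℤ :=
  (Nat.fib a : ℤ) ^ 2 + (Nat.fib b : ℤ) ^ 2 + (Nat.fib c : ℤ) ^ 2 -
    3 * (Nat.fib a : ℤ) * (Nat.fib b : ℤ) * (Nat.fib c : ℤ)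

lemma fibA (n : ℕ) : Nat.fib (n + 2) ≤ 2 * Nat.fib (n + 1) := by
  rw [Nat.fib_add_two]
  have := Nat.fib_le_fib_succ (n := n)
  omega

lemma fibB (n : ℕ) : 3 * Nat.fib (n + 2) ≤ 2 * Nat.fib (n + 3) := by
  have e : Nat.fib (n + 3) = Nat.fib (n + 1) + Nat.fib (n + 2) := Nat.fib_add_two
  have := fibA n
  omega

lemma fibC (n : ℕ) : 3 * Nat.fib (n + 4) ≤ 5 * Nat.fib (n + 3) := by
  have e : Nat.fib (n + 4) = Nat.fib (n + 2) + Nat.fib (n + 3) := Nat.fib_add_two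
  have := fibB n
  omega

lemma three_fib_le (n : ℕ) (h : 2 ≤ n) : 3 * Nat.fib n ≤ 2 * Nat.fib (n + 1) := by
  obtain ⟨m, rfl⟩ : ∃ m, n = m + 2 := ⟨n - 2, by omega⟩
  exact fibB m

lemma fib_succ_le_five (n : ℕ) (h : 3 ≤ n) : 3 * Nat.fib (n + 1) ≤ 5 * Nat.fib n := by
  obtain ⟨m, rfl⟩ : ∃ m, n = m + 3 := ⟨n - 3, by omega⟩
  exact fibC m

lemma cassini (n : ℕ) :
    ((Nat.fib (n + 1) : ℤ)) ^ 2 - Nat.fib n * Nat.fib (n + 2) = (-1) ^ n := by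
  induction n with
  | zero => simp
  | succ k ih =>
    have h1 : (Nat.fib (k + 2) : ℤ) = Nat.fib k + Nat.fib (k + 1) := by
      rw [Nat.fib_add_two]; push_cast; ring
    have h2 : (Nat.fib (k + 3) : ℤ) = Nat.fib (k + 1) + Nat.fib (k + 2) := by
      rw [show k + 3 = (k + 1) + 2 from rfl, Nat.fib_add_two]; push_cast; ring
    rw [show k + 1 + 2 = k + 3 from rfl, pow_succ]
    linear_combination (-1 : ℤ) * ih + (Nat.fib (k + 2) : ℤ) * h1
      - (Nat.fib (k + 1) : ℤ) * h2

/-- Let `2 ≤ a ≤ b ≤ c` with `m(a,b,c) > 0` and `F(c) < 3·F(a)·F(b)` (non-minimal).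
Then `m(a,b,c) = 2`, `a = 2`, `c = b + 2`, and `b` is even with `b > 2`;
in particular `(F(a), F(b), F(c)) = (1, F(b), F(b+2))`. -/
theorem non_minimal_classification (a b c : ℕ) (ha : 2 ≤ a) (hab : a ≤ b) (hbc : b ≤ c)
    (hm : 0 < mF a b c) (hnm : Nat.fib c < 3 * Nat.fib a * Nat.fib b) :
    mF a b c = 2 ∧ a = 2 ∧ c = b + 2 ∧ Even b ∧ 2 < b ∧
      (Nat.fib a, Nat.fib b, Nat.fib c) = (1, Nat.fib b, Nat.fib (b + 2)) := by
  have hm' : 3 * (Nat.fib a : ℤ) * Nat.fib b * Nat.fib c <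
      (Nat.fib a : ℤ) ^ 2 + (Nat.fib b : ℤ) ^ 2 + (Nat.fib c : ℤ) ^ 2 := by
    unfold mF at hm; linarith
  have hnm' : (Nat.fib c : ℤ) < 3 * Nat.fib a * Nat.fib b := by exact_mod_cast hnm
  have hXY : (Nat.fib a : ℤ) ≤ Nat.fib b := by exact_mod_cast Nat.fib_mono hab
  have hYZ : (Nat.fib b : ℤ) ≤ Nat.fib c := by exact_mod_cast Nat.fib_mono hbc
  have hY1 : (1 : ℤ) ≤ Nat.fib b := by
    exact_mod_cast Nat.fib_pos.2 (by omega)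
  rcases eq_or_lt_of_le ha with hae | ha3
  swap
  · exfalso
    have hb3 : 3 ≤ b := le_trans ha3 hab
    have hX2 : (2 : ℤ) ≤ Nat.fib a := by
      have h1 : Nat.fib 3 ≤ Nat.fib a := Nat.fib_mono ha3
      have h2 : Nat.fib 3 = 2 := by decide
      exact_mod_cast h2 ▸ h1
    have hk1 : (Nat.fib c : ℤ) * (3 * Nat.fib a * Nat.fib b - Nat.fib c) <
        (Nat.fib a : ℤ) ^ 2 + (Nat.fib b : ℤ) ^ 2 := by nlinarith [hm']
    have hkpos : (1 : ℤ) ≤ 3 * Nat.fib a * Nat.fib b - Nat.fib c := by linarith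
    have hykzk : (Nat.fib b : ℤ) * (3 * Nat.fib a * Nat.fib b - Nat.fib c) ≤
        (Nat.fib c : ℤ) * (3 * Nat.fib a * Nat.fib b - Nat.fib c) :=
      mul_le_mul_of_nonneg_right hYZ (by linarith)
    have hklt : 3 * (Nat.fib a : ℤ) * Nat.fib b - Nat.fib c < 2 * Nat.fib b := by
      nlinarith [hk1, hykzk, hXY, hY1]
    have hz4y : 4 * (Nat.fib b : ℤ) < Nat.fib c := by
      nlinarith [mul_nonneg (by linarith : (0:ℤ) ≤ (Nat.fib a : ℤ) - 2) (by linarith : (0:ℤ) ≤ (Nat.fib b : ℤ))]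
    have hk2 : 2 * (3 * (Nat.fib a : ℤ) * Nat.fib b - Nat.fib c) < Nat.fib b := by
      nlinarith [hk1, mul_lt_mul_of_pos_right hz4y (by linarith : (0:ℤ) < 3 * (Nat.fib a : ℤ) * Nat.fib b - Nat.fib c), hXY, hY1]
    have h4z : 11 * (Nat.fib a : ℤ) * Nat.fib b < 4 * Nat.fib c := by
      nlinarith [mul_nonneg (by linarith : (0:ℤ) ≤ (Nat.fib a : ℤ) - 2) (by linarith : (0:ℤ) ≤ (Nat.fib b : ℤ))]
    have hfab : Nat.fib (a + b) = Nat.fib (a - 1) * Nat.fib b + Nat.fib a * Nat.fib (b + 1) := by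
      have := Nat.fib_add (a - 1) b
      rw [show a - 1 + b + 1 = a + b by omega, show a - 1 + 1 = a by omega] at this
      exact this
    have hL3 : 3 * Nat.fib (a - 1) ≤ 2 * Nat.fib a := by
      have := three_fib_le (a - 1) (by omega)
      rwa [show a - 1 + 1 = a by omega] at this
    have hL2 : 3 * Nat.fib (b + 1) ≤ 5 * Nat.fib b := fib_succ_le_five b hb3
    have h12 : 12 * Nat.fib (a + b) ≤ 28 * (Nat.fib a * Nat.fib b) := by
      rw [hfab]
      nlinarith [Nat.mul_le_mul_right (Nat.fib b) hL3, Nat.mul_le_mul_left (Nat.fib a) hL2]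
    have hablt : (Nat.fib (a + b) : ℤ) < Nat.fib c := by
      have h12' : 12 * (Nat.fib (a + b) : ℤ) ≤ 28 * ((Nat.fib a : ℤ) * Nat.fib b) := by
        exact_mod_cast h12
      nlinarith [h4z, mul_nonneg (by linarith : (0:ℤ) ≤ (Nat.fib a:ℤ)) (by linarith : (0:ℤ) ≤ (Nat.fib b:ℤ))]
    have hcab : a + b < c := by
      by_contra hle
      have h := Nat.fib_mono (show c ≤ a + b by omega)
      have : (Nat.fib c : ℤ) ≤ (Nat.fib (a + b) : ℤ) := by exact_mod_cast h
      linarith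
    have hge : Nat.fib (a + b + 1) ≤ Nat.fib c := Nat.fib_mono (by omega)
    have hfab1 : Nat.fib (a + b + 1) = Nat.fib a * Nat.fib b + Nat.fib (a + 1) * Nat.fib (b + 1) :=
      Nat.fib_add a b
    have hL4a : 3 * Nat.fib a ≤ 2 * Nat.fib (a + 1) := three_fib_le a (by omega)
    have hL4b : 3 * Nat.fib b ≤ 2 * Nat.fib (b + 1) := three_fib_le b (by omega)
    have h13 : 13 * (Nat.fib a * Nat.fib b) ≤ 4 * Nat.fib (a + b + 1) := by
      rw [hfab1]
      nlinarith [Nat.mul_le_mul hL4a hL4b]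
    have h13' : 13 * ((Nat.fib a : ℤ) * Nat.fib b) ≤ 4 * (Nat.fib c : ℤ) := by
      calc 13 * ((Nat.fib a : ℤ) * Nat.fib b) ≤ 4 * (Nat.fib (a + b + 1) : ℤ) := by
            exact_mod_cast h13
        _ ≤ 4 * (Nat.fib c : ℤ) := by
            have : (Nat.fib (a + b + 1) : ℤ) ≤ Nat.fib c := by exact_mod_cast hge
            linarith
    nlinarith [h13', hnm', mul_nonneg (by linarith : (0:ℤ) ≤ (Nat.fib a:ℤ)) (by linarith : (0:ℤ) ≤ (Nat.fib b:ℤ))]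
  -- a = 2
  subst hae
  have hf2 : (Nat.fib 2 : ℤ) = 1 := by norm_num
  rw [hf2] at hm' hnm' hXY
  -- c ≠ b
  have hcb : c ≠ b := by
    rintro rfl
    nlinarith [hm', hY1]
  -- c ≠ b + 1
  have hcb1 : c ≠ b + 1 := by
    rintro rfl
    obtain ⟨d, rfl⟩ : ∃ d, b = d + 2 := ⟨b - 2, by omega⟩
    have hY : (Nat.fib (d + 2) : ℤ) = Nat.fib d + Nat.fib (d + 1) := by
      rw [Nat.fib_add_two]; push_cast; ring
    have hZ : (Nat.fib (d + 2 + 1) : ℤ) = Nat.fib d + 2 * Nat.fib (d + 1) := by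
      rw [show d + 2 + 1 = (d + 1) + 2 from rfl, Nat.fib_add_two, Nat.fib_add_two]
      push_cast; ring
    rw [hY, hZ] at hm'
    have hv : (1 : ℤ) ≤ Nat.fib (d + 1) := by
      exact_mod_cast Nat.fib_pos.2 (by omega)
    have hu : (0 : ℤ) ≤ Nat.fib d := by positivity
    nlinarith [hm', hv, hu]
  -- c ≤ b + 2
  have hcle : c ≤ b + 2 := by
    by_contra hgt
    have h3 : Nat.fib (b + 3) ≤ Nat.fib c := Nat.fib_mono (by omega)
    have hfb3 : Nat.fib (b + 3) = Nat.fib b + 2 * Nat.fib (b + 1) := by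
      rw [show b + 3 = (b + 1) + 2 from rfl, Nat.fib_add_two, Nat.fib_add_two]
      ring
    have hL4 : 3 * Nat.fib b ≤ 2 * Nat.fib (b + 1) := three_fib_le b hab
    have hnmn : Nat.fib c < 3 * Nat.fib b := by
      have : Nat.fib 2 = 1 := by decide
      omega
    omega
  have hc : c = b + 2 := by omega
  subst hc
  have hZe : (Nat.fib (b + 2) : ℤ) = Nat.fib b + Nat.fib (b + 1) := by
    rw [Nat.fib_add_two]; push_cast; ring
  have hcas := cassini b
  have hmval : mF 2 b (b + 2) = 1 + (-1 : ℤ) ^ b := by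
    unfold mF
    rw [hf2]
    linear_combination hcas + ((Nat.fib (b + 2) : ℤ) - Nat.fib b + Nat.fib (b + 1)) * hZe
  have hbeven : Even b := by
    rcases Nat.even_or_odd b with h | h
    · exact h
    · exfalso
      rw [hmval, Odd.neg_one_pow h] at hm
      norm_num at hm
  have hm2 : mF 2 b (b + 2) = 2 := by
    rw [hmval, Even.neg_one_pow hbeven]; norm_num
  have hb2 : 2 < b := by
    rcases Nat.lt_or_ge 2 b with h | h
    · exact h
    · exfalso
      have hb : b = 2 := by omega
      subst hb
      revert hnm
      decide
  exact ⟨hm2, rfl, rfl, hbeven, hb2, by norm_num⟩
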